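/- arXiv:2101.01711 — 6 statements merged into one kernel-verified Lean document; each statement's English description precedes it below -/
import Mathlib

section
/- Fix d ≥ 1, an inverse temperature β > 0, a disorder strength λ > 0, and a realization η : ℤ^d → ℝ^m of the field. Let Λ'_1, …, Λ'_N be pairwise disjoint bounded subsets of ℤ^d and let Λ' := ∪_{j=1}^N Λ'_j. Then: (i) Fluc_{Λ'}(η) ≤ Σ_{j=1}^N (|Λ'_j|/|Λ'|) Fluc_{Λ'_j}(η); (ii) for each i ∈ {1,…,m}, sup_{τ ∈ S^{ℤ^d∖Λ'}} Σ_{v∈Λ'} ⟨f_{v,i}(σ)⟩_{Λ'}^{τ} ≤ Σ_{j=1}^N sup_{τ ∈ S^{ℤ^d∖Λ'_j}} Σ_{v∈Λ'_j} ⟨f_{v,i}(σ)⟩_{Λ'_j}^{τ}; and (iii) for each i ∈ {1,…,m}, inf_{τ ∈ S^{ℤ^d∖Λ'}} Σ_{v∈Λ'} ⟨f_{v,i}(σ)⟩_{Λ'}^{τ} ≥ Σ_{j=1}^N inf_{τ ∈ S^{ℤ^d∖Λ'_j}} Σ_{v∈Λ'_j} ⟨f_{v,i}(σ)⟩_{Λ'_j}^{τ}.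 -/
open MeasureTheory ProbabilityTheory

noncomputable section

/-- The vertex set of the lattice `ℤ^d`. -/
abbrev Vtx (d : ℕ) := Fin d → ℤ

/-- The box `Λ_L = {-L, …, L}^d`. -/
def boxZ (d L : ℕ) : Finset (Vtx d) :=
  Fintype.piFinset fun _ => Finset.Icc (-(L : ℤ)) (L : ℤ)

/-- The Euclidean norm on `ℝ^m`. -/
def euclNorm {m : ℕ} (x : Fin m → ℝ) : ℝ := Real.sqrt (∑ i, (x i) ^ 2)

/-- The external vertex boundary `∂Λ = {v ∉ Λ : B(v,1) ∩ Λ ≠ ∅}` (ℓ∞-balls). -/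
def extBdry {d : ℕ} (Λ : Finset (Vtx d)) : Set (Vtx d) :=
  {v | v ∉ Λ ∧ ∃ w ∈ Λ, ∀ i, |v i - w i| ≤ 1}

variable {d : ℕ} {S : Type} [MeasurableSpace S]

/-- Gluing of an interior configuration on `Λ` with a boundary condition `τ` outside. -/
def glue (Λ : Finset (Vtx d)) (σΛ : ∀ _ : Λ, S) (τ : Vtx d → S) : Vtx d → S :=
  fun v => if h : v ∈ Λ then σΛ ⟨v, h⟩ else τ v

/-- The disordered Hamiltonian `H_Λ^{η,λ}(σ) = H_Λ(σ) - λ Σ_{v∈Λ} η_v · f_v(σ)`. -/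
def disH {m : ℕ} (H : Finset (Vtx d) → (Vtx d → S) → ℝ)
    (f : Vtx d → (Vtx d → S) → Fin m → ℝ) (lam : ℝ)
    (η : Vtx d → Fin m → ℝ) (Λ : Finset (Vtx d)) (σ : Vtx d → S) : ℝ :=
  H Λ σ - lam * ∑ v ∈ Λ, ∑ i, η v i * f v σ i

/-- The thermal expectation `⟨g(σ)⟩_Λ^τ` with respect to the finite-volume Gibbs measure
`μ^{η,λ}_{β,Λ,τ}` of the disordered system. -/
def gibbsExp {m : ℕ} (κ : Measure S) (H : Finset (Vtx d) → (Vtx d → S) → ℝ)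
    (f : Vtx d → (Vtx d → S) → Fin m → ℝ) (β lam : ℝ)
    (η : Vtx d → Fin m → ℝ) (Λ : Finset (Vtx d)) (τ : Vtx d → S)
    (g : (Vtx d → S) → ℝ) : ℝ :=
  (∫ σΛ : ∀ _ : Λ, S, g (glue Λ σΛ τ) *
      Real.exp (-β * disH H f lam η Λ (glue Λ σΛ τ)) ∂Measure.pi fun _ => κ) /
  (∫ σΛ : ∀ _ : Λ, S, Real.exp (-β * disH H f lam η Λ (glue Λ σΛ τ)) ∂Measure.pi fun _ => κ)

/-- The fluctuation observable
`Fluc_Λ(η) := sup_{τ₁,τ₂} |(1/|Λ|) Σ_{v∈Λ} (⟨f_v(σ)⟩_Λ^{τ₁} - ⟨f_v(σ)⟩_Λ^{τ₂})|`. -/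
def Fluc {m : ℕ} (κ : Measure S) (H : Finset (Vtx d) → (Vtx d → S) → ℝ)
    (f : Vtx d → (Vtx d → S) → Fin m → ℝ) (β lam : ℝ)
    (Λ : Finset (Vtx d)) (η : Vtx d → Fin m → ℝ) : ℝ :=
  ⨆ τ₁ : Vtx d → S, ⨆ τ₂ : Vtx d → S,
    euclNorm (fun i => ((Λ.card : ℝ))⁻¹ *
      ∑ v ∈ Λ, (gibbsExp κ H f β lam η Λ τ₁ (fun σ => f v σ i)
        - gibbsExp κ H f β lam η Λ τ₂ (fun σ => f v σ i)))

/-!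
By consistency, the `Λ'`-expectation of `∑_{v ∈ Λ'_j} f_v` is the `Λ'`-expectation of the block
quantity `T_j(σ) := ∑_{v ∈ Λ'_j} ⟨f_v⟩_{Λ'_j}^σ`, where `σ` acts as boundary condition. Bounds on
`T_j` that are uniform in the boundary condition pass to its expectation, giving (ii) and (iii).
For (i), the difference of the expectations of `T_j` under two boundary conditions is an average of
`T_j(σ) - T_j(σ')` over pairs of configurations, so its norm is at most `|Λ'_j| Fluc_{Λ'_j}`.
-/

open Finset

section EuclNorm

variable {m : ℕ}

lemma euclNorm_eq_norm_toLp (x : Fin m → ℝ) : euclNorm x = ‖WithLp.toLp 2 x‖ := by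
  simp [euclNorm, EuclideanSpace.norm_eq]

lemma abs_apply_le_euclNorm (x : Fin m → ℝ) (i : Fin m) : |x i| ≤ euclNorm x := by
  rw [euclNorm_eq_norm_toLp]
  exact PiLp.norm_apply_le (WithLp.toLp 2 x) i

lemma euclNorm_le_sum_abs (x : Fin m → ℝ) : euclNorm x ≤ ∑ i, |x i| :=
  Real.sqrt_le_iff.mpr ⟨by positivity, by
    simpa only [sq_abs] using sum_sq_le_sq_sum_of_nonneg fun i _ => abs_nonneg (x i)⟩

lemma euclNorm_smul (c : ℝ) (x : Fin m → ℝ) : euclNorm (c • x) = |c| * euclNorm x := by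
  rw [euclNorm_eq_norm_toLp, euclNorm_eq_norm_toLp, WithLp.toLp_smul, norm_smul, Real.norm_eq_abs]

lemma euclNorm_sum_le {ι : Type*} (s : Finset ι) (x : ι → Fin m → ℝ) :
    euclNorm (∑ j ∈ s, x j) ≤ ∑ j ∈ s, euclNorm (x j) := by
  simp only [euclNorm_eq_norm_toLp, WithLp.toLp_sum]
  exact norm_sum_le _ _

end EuclNorm

lemma norm_integral_sub_integral_le {Ω₁ Ω₂ E : Type*} [MeasurableSpace Ω₁] [MeasurableSpace Ω₂]
    [NormedAddCommGroup E] [NormedSpace ℝ E] [CompleteSpace E] {ν₁ : Measure Ω₁} {ν₂ : Measure Ω₂}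
    [IsProbabilityMeasure ν₁] [IsProbabilityMeasure ν₂] {T₁ : Ω₁ → E} {T₂ : Ω₂ → E}
    (h₁ : Integrable T₁ ν₁) (h₂ : Integrable T₂ ν₂) {c : ℝ} (h : ∀ x y, ‖T₁ x - T₂ y‖ ≤ c) :
    ‖∫ x, T₁ x ∂ν₁ - ∫ y, T₂ y ∂ν₂‖ ≤ c := by
  have outer : ∫ x, T₁ x ∂ν₁ - ∫ y, T₂ y ∂ν₂ = ∫ x, (T₁ x - ∫ y, T₂ y ∂ν₂) ∂ν₁ := by
    rw [integral_sub h₁ (integrable_const _), integral_const, probReal_univ, one_smul]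
  have inner (x : Ω₁) : T₁ x - ∫ y, T₂ y ∂ν₂ = ∫ y, (T₁ x - T₂ y) ∂ν₂ := by
    rw [integral_sub (integrable_const _) h₂, integral_const, probReal_univ, one_smul]
  rw [outer]
  refine (norm_integral_le_of_norm_le_const (C := c) (ae_of_all _ fun x => ?_)).trans_eq (by simp)
  rw [inner]
  exact (norm_integral_le_of_norm_le_const (ae_of_all _ (h x))).trans_eq (by simp)

lemma measurable_glue (Λ : Finset (Vtx d)) :
    Measurable fun p : (Vtx d → S) × (Λ → S) => glue Λ p.2 p.1 := by
  refine measurable_pi_lambda _ fun v => ?_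
  by_cases h : v ∈ Λ
  · simpa [glue, h, Function.comp_def] using (measurable_pi_apply (⟨v, h⟩ : Λ)).comp measurable_snd
  · simpa [glue, h, Function.comp_def] using (measurable_pi_apply v).comp measurable_fst

lemma measurable_glue_left (Λ : Finset (Vtx d)) (τ : Vtx d → S) :
    Measurable fun σΛ : Λ → S => glue Λ σΛ τ :=
  (measurable_glue Λ).comp measurable_prodMk_left

section Gibbs

variable {m : ℕ} {κ : Measure S} {H : Finset (Vtx d) → (Vtx d → S) → ℝ}
  {f : Vtx d → (Vtx d → S) → Fin m → ℝ} {β lam : ℝ} {η : Vtx d → Fin m → ℝ}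
  {Λ : Finset (Vtx d)} {τ : Vtx d → S}

structure IsAdmissible (H : Finset (Vtx d) → (Vtx d → S) → ℝ)
    (f : Vtx d → (Vtx d → S) → Fin m → ℝ) : Prop where
  measurable_H : ∀ Λ, Measurable (H Λ)
  bounded_H : ∀ Λ, ∃ C, ∀ σ, |H Λ σ| ≤ C
  measurable_f : ∀ v i, Measurable fun σ => f v σ i
  abs_f_le_one : ∀ v σ i, |f v σ i| ≤ 1

def IsConsistent (κ : Measure S) (H : Finset (Vtx d) → (Vtx d → S) → ℝ)
    (f : Vtx d → (Vtx d → S) → Fin m → ℝ) (β lam : ℝ) (η : Vtx d → Fin m → ℝ) : Prop :=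
  ∀ Λ₀ Λ : Finset (Vtx d), Λ₀ ⊆ Λ → ∀ (τ : Vtx d → S) (g : (Vtx d → S) → ℝ), Measurable g →
    (∃ C, ∀ σ, |g σ| ≤ C) →
    gibbsExp κ H f β lam η Λ τ (fun σ => gibbsExp κ H f β lam η Λ₀ σ g)
      = gibbsExp κ H f β lam η Λ τ g

/-- The Gibbs measure `μ^{η,λ}_{β,Λ,τ}`, seen on the configurations inside `Λ`. -/
def gibbsMeasure (κ : Measure S) (H : Finset (Vtx d) → (Vtx d → S) → ℝ)
    (f : Vtx d → (Vtx d → S) → Fin m → ℝ) (β lam : ℝ) (η : Vtx d → Fin m → ℝ)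
    (Λ : Finset (Vtx d)) (τ : Vtx d → S) : Measure (Λ → S) :=
  (Measure.pi fun _ => κ).tilted fun σΛ => -β * disH H f lam η Λ (glue Λ σΛ τ)

lemma gibbsExp_eq_integral (g : (Vtx d → S) → ℝ) :
    gibbsExp κ H f β lam η Λ τ g
      = ∫ σΛ, g (glue Λ σΛ τ) ∂gibbsMeasure κ H f β lam η Λ τ := by
  rw [gibbsMeasure, integral_tilted, gibbsExp, ← integral_div]
  simp_rw [smul_eq_mul, div_mul_eq_mul_div, mul_comm]

instance : IsZeroOrProbabilityMeasure (gibbsMeasure κ H f β lam η Λ τ) := by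
  unfold gibbsMeasure; infer_instance

lemma integrable_comp_glue {g : (Vtx d → S) → ℝ} (hg : Measurable g) {C : ℝ}
    (hgC : ∀ σ, |g σ| ≤ C) :
    Integrable (fun σΛ => g (glue Λ σΛ τ)) (gibbsMeasure κ H f β lam η Λ τ) :=
  Integrable.of_bound (hg.comp (measurable_glue_left Λ τ)).aestronglyMeasurable C
    (ae_of_all _ fun _ => hgC _)

lemma gibbsExp_sum {ι : Type*} (s : Finset ι) {g : ι → (Vtx d → S) → ℝ}
    (hg : ∀ j, Measurable (g j)) {C : ι → ℝ} (hgC : ∀ j σ, |g j σ| ≤ C j) :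
    gibbsExp κ H f β lam η Λ τ (fun σ => ∑ j ∈ s, g j σ)
      = ∑ j ∈ s, gibbsExp κ H f β lam η Λ τ (g j) := by
  simp only [gibbsExp_eq_integral]
  exact integral_finsetSum s fun j _ => integrable_comp_glue (hg j) (hgC j)

def gibbsExpVec (κ : Measure S) (H : Finset (Vtx d) → (Vtx d → S) → ℝ)
    (f : Vtx d → (Vtx d → S) → Fin m → ℝ) (β lam : ℝ) (η : Vtx d → Fin m → ℝ)
    (Λ : Finset (Vtx d)) (τ : Vtx d → S) (T : (Vtx d → S) → Fin m → ℝ) : Fin m → ℝ :=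
  fun i => gibbsExp κ H f β lam η Λ τ (fun σ => T σ i)

lemma toLp_gibbsExpVec {T : (Vtx d → S) → Fin m → ℝ} (hT : ∀ i, Measurable fun σ => T σ i)
    {C : ℝ} (hTC : ∀ σ i, |T σ i| ≤ C) :
    WithLp.toLp 2 (gibbsExpVec κ H f β lam η Λ τ T)
      = ∫ σΛ, WithLp.toLp 2 (T (glue Λ σΛ τ)) ∂gibbsMeasure κ H f β lam η Λ τ := by
  ext i
  rw [eval_integral_piLp (f := fun σΛ : Λ → S => WithLp.toLp 2 (T (glue Λ σΛ τ)))
    (μ := gibbsMeasure κ H f β lam η Λ τ) fun i => integrable_comp_glue (hT i) (hTC · i)]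
  exact gibbsExp_eq_integral (fun σ => T σ i)

namespace IsAdmissible

variable (hA : IsAdmissible H f)
include hA

lemma measurable_disH (lam : ℝ) (η : Vtx d → Fin m → ℝ) (Λ : Finset (Vtx d)) :
    Measurable (disH H f lam η Λ) :=
  (hA.measurable_H Λ).sub (measurable_const.mul (Finset.measurable_sum _ fun v _ =>
    Finset.measurable_sum _ fun i _ => measurable_const.mul (hA.measurable_f v i)))

lemma exists_abs_disH_le (lam : ℝ) (η : Vtx d → Fin m → ℝ) (Λ : Finset (Vtx d)) :
    ∃ C, ∀ σ, |disH H f lam η Λ σ| ≤ C := by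
  obtain ⟨C, hC⟩ := hA.bounded_H Λ
  refine ⟨C + |lam| * ∑ v ∈ Λ, ∑ i, |η v i|, fun σ => (abs_sub _ _).trans (add_le_add (hC σ) ?_)⟩
  rw [abs_mul]
  gcongr
  refine (abs_sum_le_sum_abs _ _).trans (sum_le_sum fun v _ => ?_)
  refine (abs_sum_le_sum_abs _ _).trans (sum_le_sum fun i _ => ?_)
  rw [abs_mul]
  exact mul_le_of_le_one_right (abs_nonneg _) (hA.abs_f_le_one v σ i)

variable [IsProbabilityMeasure κ]

lemma isProbabilityMeasure_gibbsMeasure :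
    IsProbabilityMeasure (gibbsMeasure κ H f β lam η Λ τ) := by
  obtain ⟨C, hC⟩ := hA.exists_abs_disH_le lam η Λ
  refine isProbabilityMeasure_tilted (Integrable.of_bound (((hA.measurable_disH lam η Λ).comp
    (measurable_glue_left Λ τ)).const_mul (-β)).exp.aestronglyMeasurable (Real.exp (|β| * C))
    (ae_of_all _ fun σΛ => ?_))
  rw [Real.norm_eq_abs, Real.abs_exp, Real.exp_le_exp]
  refine (le_abs_self _).trans ?_
  rw [abs_mul, abs_neg]
  exact mul_le_mul_of_nonneg_left (hC _) (abs_nonneg _)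

lemma gibbsExp_le_of_forall_le {g : (Vtx d → S) → ℝ} (hg : Measurable g) {C c : ℝ}
    (hgC : ∀ σ, |g σ| ≤ C) (h : ∀ σ, g σ ≤ c) : gibbsExp κ H f β lam η Λ τ g ≤ c := by
  have : IsProbabilityMeasure (gibbsMeasure κ H f β lam η Λ τ) :=
    hA.isProbabilityMeasure_gibbsMeasure
  rw [gibbsExp_eq_integral]
  exact (integral_mono (integrable_comp_glue hg hgC) (integrable_const c) fun _ => h _).trans_eq
    (by simp)

lemma le_gibbsExp_of_forall_le {g : (Vtx d → S) → ℝ} (hg : Measurable g) {C c : ℝ}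
    (hgC : ∀ σ, |g σ| ≤ C) (h : ∀ σ, c ≤ g σ) : c ≤ gibbsExp κ H f β lam η Λ τ g := by
  have : IsProbabilityMeasure (gibbsMeasure κ H f β lam η Λ τ) :=
    hA.isProbabilityMeasure_gibbsMeasure
  rw [gibbsExp_eq_integral]
  exact (integral_mono (integrable_const c) (integrable_comp_glue hg hgC) fun _ => h _).trans_eq'
    (by simp)

lemma abs_gibbsExp_le {g : (Vtx d → S) → ℝ} (hg : Measurable g) {C : ℝ}
    (hgC : ∀ σ, |g σ| ≤ C) : |gibbsExp κ H f β lam η Λ τ g| ≤ C :=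
  abs_le.mpr ⟨hA.le_gibbsExp_of_forall_le hg hgC fun σ => neg_le_of_abs_le (hgC σ),
    hA.gibbsExp_le_of_forall_le hg hgC fun σ => le_of_abs_le (hgC σ)⟩

lemma measurable_gibbsExp_boundary {g : (Vtx d → S) → ℝ} (hg : Measurable g) :
    Measurable fun τ => gibbsExp κ H f β lam η Λ τ g := by
  have hglue := measurable_glue (S := S) Λ
  have hweight : Measurable fun p : (Vtx d → S) × (Λ → S) =>
      Real.exp (-β * disH H f lam η Λ (glue Λ p.2 p.1)) :=
    (((hA.measurable_disH lam η Λ).comp hglue).const_mul (-β)).exp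
  exact ((hg.comp hglue).mul hweight).stronglyMeasurable.integral_prod_right'.measurable.div
    hweight.stronglyMeasurable.integral_prod_right'.measurable

lemma euclNorm_gibbsExpVec_sub_le {T : (Vtx d → S) → Fin m → ℝ}
    (hT : ∀ i, Measurable fun σ => T σ i) {C : ℝ} (hTC : ∀ σ i, |T σ i| ≤ C) {c : ℝ}
    (h : ∀ σ σ', euclNorm (T σ - T σ') ≤ c) (Λ₁ Λ₂ : Finset (Vtx d)) (τ₁ τ₂ : Vtx d → S) :
    euclNorm (gibbsExpVec κ H f β lam η Λ₁ τ₁ T - gibbsExpVec κ H f β lam η Λ₂ τ₂ T) ≤ c := by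
  have : IsProbabilityMeasure (gibbsMeasure κ H f β lam η Λ₁ τ₁) :=
    hA.isProbabilityMeasure_gibbsMeasure
  have : IsProbabilityMeasure (gibbsMeasure κ H f β lam η Λ₂ τ₂) :=
    hA.isProbabilityMeasure_gibbsMeasure
  have hint (Λ : Finset (Vtx d)) (τ : Vtx d → S) : Integrable
      (fun σΛ => WithLp.toLp 2 (T (glue Λ σΛ τ))) (gibbsMeasure κ H f β lam η Λ τ) :=
    Integrable.of_eval_piLp fun i => integrable_comp_glue (hT i) (hTC · i)
  rw [euclNorm_eq_norm_toLp, WithLp.toLp_sub, toLp_gibbsExpVec hT hTC, toLp_gibbsExpVec hT hTC]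
  refine norm_integral_sub_integral_le (hint Λ₁ τ₁) (hint Λ₂ τ₂) fun x y => ?_
  rw [← WithLp.toLp_sub, ← euclNorm_eq_norm_toLp]
  exact h _ _

end IsAdmissible

end Gibbs

section TotalExp

variable {m : ℕ} {κ : Measure S} {H : Finset (Vtx d) → (Vtx d → S) → ℝ}
  {f : Vtx d → (Vtx d → S) → Fin m → ℝ} {β lam : ℝ} {η : Vtx d → Fin m → ℝ}
  {Λ : Finset (Vtx d)}

def totalExp (κ : Measure S) (H : Finset (Vtx d) → (Vtx d → S) → ℝ)
    (f : Vtx d → (Vtx d → S) → Fin m → ℝ) (β lam : ℝ) (η : Vtx d → Fin m → ℝ)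
    (Λ : Finset (Vtx d)) (τ : Vtx d → S) : Fin m → ℝ :=
  fun i => ∑ v ∈ Λ, gibbsExp κ H f β lam η Λ τ (fun σ => f v σ i)

lemma Fluc_eq_iSup : Fluc κ H f β lam Λ η = ⨆ τ₁, ⨆ τ₂,
    (Λ.card : ℝ)⁻¹ * euclNorm (totalExp κ H f β lam η Λ τ₁ - totalExp κ H f β lam η Λ τ₂) := by
  refine iSup_congr fun τ₁ => iSup_congr fun τ₂ => ?_
  have hsmul : (fun i => (Λ.card : ℝ)⁻¹ * ∑ v ∈ Λ, (gibbsExp κ H f β lam η Λ τ₁ (fun σ => f v σ i)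
      - gibbsExp κ H f β lam η Λ τ₂ (fun σ => f v σ i)))
      = (Λ.card : ℝ)⁻¹ • (totalExp κ H f β lam η Λ τ₁ - totalExp κ H f β lam η Λ τ₂) := by
    ext i
    simp [totalExp, sum_sub_distrib]
  rw [hsmul, euclNorm_smul, abs_inv, Nat.abs_cast]

namespace IsAdmissible

variable (hA : IsAdmissible H f) [IsProbabilityMeasure κ]
include hA

lemma abs_totalExp_le (τ : Vtx d → S) (i : Fin m) :
    |totalExp κ H f β lam η Λ τ i| ≤ Λ.card :=
  (abs_sum_le_sum_abs _ _).trans <| (sum_le_sum fun v _ =>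
    hA.abs_gibbsExp_le (hA.measurable_f v i) fun σ => hA.abs_f_le_one v σ i).trans_eq (by simp)

lemma measurable_totalExp (i : Fin m) :
    Measurable fun τ => totalExp κ H f β lam η Λ τ i :=
  Finset.measurable_sum _ fun v _ => hA.measurable_gibbsExp_boundary (hA.measurable_f v i)

lemma euclNorm_totalExp_sub_le (τ₁ τ₂ : Vtx d → S) :
    euclNorm (totalExp κ H f β lam η Λ τ₁ - totalExp κ H f β lam η Λ τ₂) ≤ m * (2 * Λ.card) := by
  calc _ ≤ ∑ i, |totalExp κ H f β lam η Λ τ₁ i - totalExp κ H f β lam η Λ τ₂ i| :=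
        euclNorm_le_sum_abs _
    _ ≤ ∑ _i : Fin m, 2 * (Λ.card : ℝ) := sum_le_sum fun i _ => by
        have h₁ : |totalExp κ H f β lam η Λ τ₁ i| ≤ Λ.card := hA.abs_totalExp_le τ₁ i
        have h₂ : |totalExp κ H f β lam η Λ τ₂ i| ≤ Λ.card := hA.abs_totalExp_le τ₂ i
        linarith [abs_sub (totalExp κ H f β lam η Λ τ₁ i) (totalExp κ H f β lam η Λ τ₂ i)]
    _ = m * (2 * Λ.card) := by simp

lemma euclNorm_totalExp_sub_le_card_mul_Fluc (τ₁ τ₂ : Vtx d → S) :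
    euclNorm (totalExp κ H f β lam η Λ τ₁ - totalExp κ H f β lam η Λ τ₂)
      ≤ Λ.card * Fluc κ H f β lam Λ η := by
  rcases Λ.eq_empty_or_nonempty with rfl | hΛ
  · simp [totalExp, euclNorm]
  have : Nonempty S := nonempty_of_isProbabilityMeasure κ
  have hbound (τ τ' : Vtx d → S) : (Λ.card : ℝ)⁻¹ * euclNorm
      (totalExp κ H f β lam η Λ τ - totalExp κ H f β lam η Λ τ')
        ≤ (Λ.card : ℝ)⁻¹ * (m * (2 * Λ.card)) := by
    gcongr
    exact hA.euclNorm_totalExp_sub_le τ τ'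
  have hle : (Λ.card : ℝ)⁻¹ * euclNorm
      (totalExp κ H f β lam η Λ τ₁ - totalExp κ H f β lam η Λ τ₂) ≤ Fluc κ H f β lam Λ η := by
    rw [Fluc_eq_iSup]
    exact (le_ciSup ⟨_, Set.forall_mem_range.2 (hbound τ₁)⟩ τ₂).trans
      (le_ciSup ⟨_, Set.forall_mem_range.2 fun τ => ciSup_le (hbound τ)⟩ τ₁)
  rwa [inv_mul_le_iff₀ (by simpa using hΛ)] at hle

end IsAdmissible

namespace IsConsistent

variable (hC : IsConsistent κ H f β lam η) (hA : IsAdmissible H f) [IsProbabilityMeasure κ]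
include hC hA

lemma sum_gibbsExp_eq_gibbsExp_totalExp {Λ₀ : Finset (Vtx d)} (h : Λ₀ ⊆ Λ) (τ : Vtx d → S)
    (i : Fin m) :
    ∑ v ∈ Λ₀, gibbsExp κ H f β lam η Λ τ (fun σ => f v σ i)
      = gibbsExp κ H f β lam η Λ τ (fun σ => totalExp κ H f β lam η Λ₀ σ i) := by
  simp only [totalExp]
  rw [gibbsExp_sum Λ₀ (fun v => hA.measurable_gibbsExp_boundary (hA.measurable_f v i))
    (fun v σ => hA.abs_gibbsExp_le (hA.measurable_f v i) (hA.abs_f_le_one v · i))]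
  exact sum_congr rfl fun v _ =>
    (hC Λ₀ Λ h τ _ (hA.measurable_f v i) ⟨1, (hA.abs_f_le_one v · i)⟩).symm

variable {ι : Type*} {s : Finset ι} {Λs : ι → Finset (Vtx d)}
  (hdisj : (s : Set ι).PairwiseDisjoint Λs)
include hdisj

lemma totalExp_biUnion (τ : Vtx d → S) :
    totalExp κ H f β lam η (s.biUnion Λs) τ
      = ∑ j ∈ s, gibbsExpVec κ H f β lam η (s.biUnion Λs) τ (totalExp κ H f β lam η (Λs j)) := by
  ext i
  rw [Finset.sum_apply, totalExp, sum_biUnion hdisj]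
  exact sum_congr rfl fun j hj =>
    hC.sum_gibbsExp_eq_gibbsExp_totalExp hA (subset_biUnion_of_mem Λs hj) τ i

lemma Fluc_biUnion_le :
    Fluc κ H f β lam (s.biUnion Λs) η
      ≤ ∑ j ∈ s, ((Λs j).card : ℝ) / (s.biUnion Λs).card * Fluc κ H f β lam (Λs j) η := by
  have : Nonempty S := nonempty_of_isProbabilityMeasure κ
  rw [Fluc_eq_iSup]
  refine ciSup_le fun τ₁ => ciSup_le fun τ₂ => ?_
  have hweights : ∑ j ∈ s, ((Λs j).card : ℝ) / (s.biUnion Λs).card * Fluc κ H f β lam (Λs j) η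
      = ((s.biUnion Λs).card : ℝ)⁻¹ * ∑ j ∈ s, (Λs j).card * Fluc κ H f β lam (Λs j) η := by
    rw [mul_sum]
    exact sum_congr rfl fun j _ => by ring
  rw [hweights, hC.totalExp_biUnion hA hdisj, hC.totalExp_biUnion hA hdisj, ← sum_sub_distrib]
  gcongr
  refine (euclNorm_sum_le _ _).trans (sum_le_sum fun j _ => ?_)
  exact hA.euclNorm_gibbsExpVec_sub_le hA.measurable_totalExp hA.abs_totalExp_le
    hA.euclNorm_totalExp_sub_le_card_mul_Fluc _ _ τ₁ τ₂

lemma iSup_totalExp_biUnion_le (i : Fin m) :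
    ⨆ τ, totalExp κ H f β lam η (s.biUnion Λs) τ i
      ≤ ∑ j ∈ s, ⨆ τ, totalExp κ H f β lam η (Λs j) τ i := by
  have : Nonempty S := nonempty_of_isProbabilityMeasure κ
  have hbdd (j : ι) : BddAbove (Set.range fun τ => totalExp κ H f β lam η (Λs j) τ i) :=
    ⟨(Λs j).card, Set.forall_mem_range.2 fun τ => le_of_abs_le (hA.abs_totalExp_le τ i)⟩
  refine ciSup_le fun τ => ?_
  rw [hC.totalExp_biUnion hA hdisj, Finset.sum_apply]
  exact sum_le_sum fun j _ => hA.gibbsExp_le_of_forall_le (hA.measurable_totalExp i)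
    (hA.abs_totalExp_le · i) fun σ => le_ciSup (hbdd j) σ

lemma sum_iInf_totalExp_le_iInf_totalExp_biUnion (i : Fin m) :
    ∑ j ∈ s, ⨅ τ, totalExp κ H f β lam η (Λs j) τ i
      ≤ ⨅ τ, totalExp κ H f β lam η (s.biUnion Λs) τ i := by
  have : Nonempty S := nonempty_of_isProbabilityMeasure κ
  have hbdd (j : ι) : BddBelow (Set.range fun τ => totalExp κ H f β lam η (Λs j) τ i) :=
    ⟨-(Λs j).card, Set.forall_mem_range.2 fun τ => neg_le_of_abs_le (hA.abs_totalExp_le τ i)⟩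
  refine le_ciInf fun τ => ?_
  rw [hC.totalExp_biUnion hA hdisj, Finset.sum_apply]
  exact sum_le_sum fun j _ => hA.le_gibbsExp_of_forall_le (hA.measurable_totalExp i)
    (hA.abs_totalExp_le · i) fun σ => ciInf_le (hbdd j) σ

end IsConsistent

end TotalExp

theorem domain_subadditivity_general
    {d : ℕ}
    (κ : Measure S) [IsProbabilityMeasure κ]
    (m : ℕ)
    (H : Finset (Vtx d) → (Vtx d → S) → ℝ)
    (hHmeas : ∀ Λ, Measurable (H Λ))
    (hHbdd : ∀ Λ, ∃ C, ∀ σ, |H Λ σ| ≤ C)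
    (f : Vtx d → (Vtx d → S) → Fin m → ℝ)
    (hfmeas : ∀ v i, Measurable fun σ => f v σ i)
    (hfbdd : ∀ v σ, euclNorm (f v σ) ≤ 1)
    (β lam : ℝ)
    (hcons : ∀ (η : Vtx d → Fin m → ℝ) (Λ' Λ : Finset (Vtx d)), Λ' ⊆ Λ →
      ∀ (τ₀ : Vtx d → S) (g : (Vtx d → S) → ℝ), Measurable g → (∃ Cg, ∀ σ, |g σ| ≤ Cg) →
      gibbsExp κ H f β lam η Λ τ₀ (fun σ => gibbsExp κ H f β lam η Λ' σ g)
        = gibbsExp κ H f β lam η Λ τ₀ g)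
    (η : Vtx d → Fin m → ℝ)
    (N : ℕ) (Λs : Fin N → Finset (Vtx d))
    (hdisj : ∀ j k, j ≠ k → Disjoint (Λs j) (Λs k)) :
    (Fluc κ H f β lam (Finset.univ.biUnion Λs) η ≤
        ∑ j, ((Λs j).card : ℝ) / ((Finset.univ.biUnion Λs).card : ℝ) *
          Fluc κ H f β lam (Λs j) η) ∧
    (∀ i : Fin m,
      (⨆ τ : Vtx d → S, ∑ v ∈ Finset.univ.biUnion Λs,
          gibbsExp κ H f β lam η (Finset.univ.biUnion Λs) τ (fun σ => f v σ i)) ≤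
        ∑ j, ⨆ τ : Vtx d → S, ∑ v ∈ Λs j,
          gibbsExp κ H f β lam η (Λs j) τ (fun σ => f v σ i)) ∧
    (∀ i : Fin m,
      (⨅ τ : Vtx d → S, ∑ v ∈ Finset.univ.biUnion Λs,
          gibbsExp κ H f β lam η (Finset.univ.biUnion Λs) τ (fun σ => f v σ i)) ≥
        ∑ j, ⨅ τ : Vtx d → S, ∑ v ∈ Λs j,
          gibbsExp κ H f β lam η (Λs j) τ (fun σ => f v σ i)) := by
  have hA : IsAdmissible H f :=
    ⟨hHmeas, hHbdd, hfmeas, fun v σ i => (abs_apply_le_euclNorm _ i).trans (hfbdd v σ)⟩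
  have hC : IsConsistent κ H f β lam η := hcons η
  have hpd : ((univ : Finset (Fin N)) : Set (Fin N)).PairwiseDisjoint Λs :=
    fun j _ k _ hjk => hdisj j k hjk
  exact ⟨hC.Fluc_biUnion_le hA hpd, hC.iSup_totalExp_biUnion_le hA hpd,
    hC.sum_iInf_totalExp_le_iInf_totalExp_biUnion hA hpd⟩

/-- Proposition (domain subadditivity property). -/
theorem domain_subadditivity
    {d : ℕ} (hd : 1 ≤ d)
    (κ : Measure S) [IsProbabilityMeasure κ]
    (m R : ℕ) (hm : 1 ≤ m)
    (H : Finset (Vtx d) → (Vtx d → S) → ℝ)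
    (hHmeas : ∀ Λ, Measurable (H Λ))
    (hHbdd : ∀ Λ, ∃ C, ∀ σ, |H Λ σ| ≤ C)
    (C_H : ℝ) (hCH : 0 ≤ C_H)
    (hbbe : ∀ (Λ : Finset (Vtx d)) (σ σ' : Vtx d → S), (∀ v ∈ Λ, σ v = σ' v) →
      |H Λ σ - H Λ σ'| ≤ C_H * (extBdry Λ).ncard / Λ.card)
    (f : Vtx d → (Vtx d → S) → Fin m → ℝ)
    (hfmeas : ∀ v i, Measurable fun σ => f v σ i)
    (hfbdd : ∀ v σ, euclNorm (f v σ) ≤ 1)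
    (hfloc : ∀ (v : Vtx d) (σ σ' : Vtx d → S),
      (∀ w : Vtx d, (∀ i, |w i - v i| ≤ (R : ℤ)) → σ w = σ' w) → f v σ = f v σ')
    (β lam : ℝ) (hβ : 0 < β) (hlam : 0 < lam)
    (hcons : ∀ (η : Vtx d → Fin m → ℝ) (Λ' Λ : Finset (Vtx d)), Λ' ⊆ Λ →
      ∀ (τ₀ : Vtx d → S) (g : (Vtx d → S) → ℝ), Measurable g → (∃ Cg, ∀ σ, |g σ| ≤ Cg) →
      gibbsExp κ H f β lam η Λ τ₀ (fun σ => gibbsExp κ H f β lam η Λ' σ g)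
        = gibbsExp κ H f β lam η Λ τ₀ g)
    (η : Vtx d → Fin m → ℝ)
    (N : ℕ) (Λs : Fin N → Finset (Vtx d))
    (hdisj : ∀ j k, j ≠ k → Disjoint (Λs j) (Λs k)) :
    (Fluc κ H f β lam (Finset.univ.biUnion Λs) η ≤
        ∑ j, ((Λs j).card : ℝ) / ((Finset.univ.biUnion Λs).card : ℝ) *
          Fluc κ H f β lam (Λs j) η) ∧
    (∀ i : Fin m,
      (⨆ τ : Vtx d → S, ∑ v ∈ Finset.univ.biUnion Λs,
          gibbsExp κ H f β lam η (Finset.univ.biUnion Λs) τ (fun σ => f v σ i)) ≤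
        ∑ j, ⨆ τ : Vtx d → S, ∑ v ∈ Λs j,
          gibbsExp κ H f β lam η (Λs j) τ (fun σ => f v σ i)) ∧
    (∀ i : Fin m,
      (⨅ τ : Vtx d → S, ∑ v ∈ Finset.univ.biUnion Λs,
          gibbsExp κ H f β lam η (Finset.univ.biUnion Λs) τ (fun σ => f v σ i)) ≥
        ∑ j, ⨅ τ : Vtx d → S, ∑ v ∈ Λs j,
          gibbsExp κ H f β lam η (Λs j) τ (fun σ => f v σ i)) :=
  domain_subadditivity_general κ m H hHmeas hHbdd f hfmeas hfbdd β lam hcons η N Λs hdisj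
end
end

section
/- There exists a numerical constant C > 0 with the following property. Let λ > 0, let g : ℝ → ℝ be a convex, λ-Lipschitz and differentiable function, and let r, δ > 0. Then the Lebesgue measure of the set Stab(λ,δ,r,g) is at most C λ r / δ². -/
open MeasureTheory

/-!
Put `h = 4 r / δ`. If a convex `g₁` stays within `r` of `g`, comparing the slopes of `g` and `g₁`
over `[t, t + h]` and `[t - h, t]` gives `g'(t - h) - δ / 2 ≤ g₁'(t) ≤ g'(t + h) + δ / 2`. Hence on
`Stab(λ,δ,r,g)` the monotone function `g'` increases by at least `δ / 2` over `[t, t + h]` or over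
`[t - h, t]`. As `g'` takes values in `[-λ, λ]`, the integral of `g'(t + h) - g'(t)` over any interval
telescopes to at most `2 λ h`, so by Markov's inequality each of these two sets has measure at most
`4 λ h / δ = 16 λ r / δ²`.
-/

/-- The set `N_{λ,r}(g)` of convex, `λ`-Lipschitz, differentiable functions uniformly
`r`-close to `g`. -/
def Nset (lam r : ℝ) (g : ℝ → ℝ) : Set (ℝ → ℝ) :=
  {g₁ | ConvexOn ℝ Set.univ g₁ ∧ LipschitzWith (Real.toNNReal lam) g₁ ∧
    Differentiable ℝ g₁ ∧ ∀ t : ℝ, |g t - g₁ t| ≤ r}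

/-- The `δ`-stability set `Stab(λ,δ,r,g)`. -/
def Stab (lam δ r : ℝ) (g : ℝ → ℝ) : Set ℝ :=
  {t | ∃ g₁ ∈ Nset lam r g, δ < |deriv g₁ t - deriv g t|}

open Set

lemma measure_le_of_forall_inter_Ioc_neg_le {μ : Measure ℝ} {s : Set ℝ} {B : ENNReal}
    (hB : ∀ n : ℕ, μ (s ∩ Ioc (-n) n) ≤ B) : μ s ≤ B := by
  have hcover : s = ⋃ n : ℕ, s ∩ Ioc (-n : ℝ) n := by
    rw [← inter_iUnion, eq_comm, inter_eq_left]
    intro x _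
    obtain ⟨n, hn⟩ := exists_nat_gt |x|
    exact mem_iUnion.2 ⟨n, by linarith [neg_abs_le x], (le_abs_self x).trans hn.le⟩
  have hmono : Monotone fun n : ℕ => s ∩ Ioc (-n : ℝ) n := fun m n hmn =>
    inter_subset_inter_right _ (Ioc_subset_Ioc (by simpa using hmn) (by simpa using hmn))
  rw [hcover, hmono.directed_le.measure_iUnion]
  exact iSup_le hB

section MonotoneShift

variable {φ : ℝ → ℝ} {a b h : ℝ}

lemma Monotone.intervalIntegral_sub_shift_le (hφ : Monotone φ) (ha : ∀ x, a ≤ φ x)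
    (hb : ∀ x, φ x ≤ b) (hh : 0 ≤ h) (u v : ℝ) :
    ∫ x in u..v, (φ (x + h) - φ x) ≤ (b - a) * h := by
  have hi : ∀ p q : ℝ, IntervalIntegrable φ volume p q := fun _ _ => hφ.intervalIntegrable
  have hih : IntervalIntegrable (fun x => φ (x + h)) volume u v :=
    (hφ.comp (monotone_id.add_const h)).intervalIntegrable
  have htele : ∫ x in u..v, (φ (x + h) - φ x)
      = (∫ x in v..v + h, φ x) - ∫ x in u..u + h, φ x := by
    rw [intervalIntegral.integral_sub hih (hi u v), intervalIntegral.integral_comp_add_right,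
      intervalIntegral.integral_interval_sub_interval_comm' (hi _ _) (hi _ _) (hi _ _)]
  have hupper : ∫ x in v..v + h, φ x ≤ ∫ _ in v..v + h, b :=
    intervalIntegral.integral_mono_on (by linarith) (hi _ _) intervalIntegrable_const
      fun x _ => hb x
  have hlower : ∫ _ in u..u + h, a ≤ ∫ x in u..u + h, φ x :=
    intervalIntegral.integral_mono_on (by linarith) intervalIntegrable_const (hi _ _)
      fun x _ => ha x
  simp only [intervalIntegral.integral_const, add_sub_cancel_left, smul_eq_mul] at hupper hlower
  linarith

lemma Monotone.volume_sub_shift_ge_inter_Ioc_le (hφ : Monotone φ) (ha : ∀ x, a ≤ φ x)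
    (hb : ∀ x, φ x ≤ b) (hh : 0 ≤ h) {c : ℝ} (hc : 0 < c) {u v : ℝ} (huv : u ≤ v) :
    volume ({x | c ≤ φ (x + h) - φ x} ∩ Ioc u v) ≤ ENNReal.ofReal ((b - a) * h / c) := by
  have hint : Integrable (fun x => φ (x + h) - φ x) (volume.restrict (Ioc u v)) :=
    ((hφ.comp (monotone_id.add_const h)).intervalIntegrable.sub
      hφ.intervalIntegrable).1
  have hmarkov := mul_meas_ge_le_integral_of_nonneg
    (Filter.Eventually.of_forall fun x => sub_nonneg.2 (hφ (le_add_of_nonneg_right hh))) hint c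
  rw [← intervalIntegral.integral_of_le huv, measureReal_def,
    Measure.restrict_apply' measurableSet_Ioc] at hmarkov
  rw [ENNReal.le_ofReal_iff_toReal_le (measure_inter_lt_top_of_right_ne_top
      measure_Ioc_lt_top.ne).ne
      (div_nonneg (mul_nonneg (sub_nonneg.2 ((ha 0).trans (hb 0))) hh) hc.le), le_div_iff₀ hc,
    mul_comm]
  exact hmarkov.trans (hφ.intervalIntegral_sub_shift_le ha hb hh u v)

lemma Monotone.volume_sub_shift_ge_le (hφ : Monotone φ) (ha : ∀ x, a ≤ φ x)
    (hb : ∀ x, φ x ≤ b) (hh : 0 ≤ h) {c : ℝ} (hc : 0 < c) :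
    volume {x | c ≤ φ (x + h) - φ x} ≤ ENNReal.ofReal ((b - a) * h / c) :=
  measure_le_of_forall_inter_Ioc_neg_le fun n =>
    hφ.volume_sub_shift_ge_inter_Ioc_le ha hb hh hc (by linarith [n.cast_nonneg (α := ℝ)])

end MonotoneShift

lemma ConvexOn.deriv_le_deriv_add_of_abs_sub_le {f g : ℝ → ℝ} {r h t : ℝ}
    (hf : ConvexOn ℝ univ f) (hg : ConvexOn ℝ univ g) (hfd : DifferentiableAt ℝ f t)
    (hgd : DifferentiableAt ℝ g (t + h)) (hfg : ∀ x, |g x - f x| ≤ r) (hh : 0 < h) :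
    deriv f t ≤ deriv g (t + h) + 2 * r / h := by
  have hlt : t < t + h := by linarith
  have hf_slope := hf.deriv_le_slope (mem_univ _) (mem_univ _) hlt hfd
  have hg_slope := hg.slope_le_deriv (mem_univ _) (mem_univ _) hlt hgd
  rw [slope_def_field, add_sub_cancel_left] at hf_slope hg_slope
  have hslopes : (f (t + h) - f t) / h ≤ (g (t + h) - g t) / h + 2 * r / h := by
    rw [← add_div]
    gcongr
    linarith [(abs_le.1 (hfg t)).2, (abs_le.1 (hfg (t + h))).1]
  linarith

lemma stab_subset_union_preimage_sub {lam δ r h : ℝ} {g : ℝ → ℝ} (hg : ConvexOn ℝ univ g)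
    (hgd : Differentiable ℝ g) (hh : 0 < h) :
    Stab lam δ r g ⊆ {t | δ - 2 * r / h ≤ deriv g (t + h) - deriv g t} ∪
      (fun t => t - h) ⁻¹' {t | δ - 2 * r / h ≤ deriv g (t + h) - deriv g t} := by
  rintro t ⟨g₁, ⟨hg₁, -, hg₁d, hclose⟩, hδ⟩
  rcases lt_abs.1 hδ with hδ | hδ
  · left
    have := hg₁.deriv_le_deriv_add_of_abs_sub_le hg (hg₁d t) (hgd _) hclose hh
    simp only [mem_ofPred_eq]
    linarith
  · right
    have := hg.deriv_le_deriv_add_of_abs_sub_le hg₁ (hgd (t - h)) (hg₁d _)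
      (fun x => abs_sub_comm (g x) (g₁ x) ▸ hclose x) hh
    simp only [mem_preimage, mem_ofPred_eq, sub_add_cancel] at this ⊢
    linarith

/-- Proposition (`δ`-stability for `λ`-Lipschitz convex functions): the Lebesgue measure of the
stability set is at most `C λ r / δ²` for a numerical constant `C`. -/
theorem lebesgue_measure_stab_le :
    ∃ C : ℝ, 0 < C ∧
      ∀ (lam : ℝ), 0 < lam →
      ∀ g : ℝ → ℝ, ConvexOn ℝ Set.univ g → LipschitzWith (Real.toNNReal lam) g →
        Differentiable ℝ g →
      ∀ r δ : ℝ, 0 < r → 0 < δ →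
        volume (Stab lam δ r g) ≤ ENNReal.ofReal (C * lam * r / δ ^ 2) := by
  refine ⟨32, by norm_num, fun lam hlam g hg hglip hgd r δ hr hδ => ?_⟩
  set h := 4 * r / δ
  have hh : 0 < h := by positivity
  have hδh : δ - 2 * r / h = δ / 2 := by simp only [h]; field_simp; ring
  have hmono : Monotone (deriv g) := monotoneOn_univ.1 (hg.monotoneOn_deriv fun x _ => hgd x)
  have hbound (x : ℝ) : |deriv g x| ≤ lam := by
    simpa [Real.coe_toNNReal _ hlam.le] using norm_deriv_le_of_lipschitz (𝕜 := ℝ) hglip (x₀ := x)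
  set S := {t | δ / 2 ≤ deriv g (t + h) - deriv g t}
  have hS : volume S ≤ ENNReal.ofReal (16 * lam * r / δ ^ 2) := by
    refine (hmono.volume_sub_shift_ge_le (fun x => (abs_le.1 (hbound x)).1)
      (fun x => (abs_le.1 (hbound x)).2) hh.le (half_pos hδ)).trans_eq ?_
    simp only [h]; field_simp; ring_nf
  calc volume (Stab lam δ r g) ≤ volume (S ∪ (fun t => t - h) ⁻¹' S) :=
        measure_mono <| by
          simpa only [hδh] using
            stab_subset_union_preimage_sub (lam := lam) (δ := δ) (r := r) hg hgd hh
    _ ≤ volume S + volume S := by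
        refine (measure_union_le _ _).trans_eq ?_
        simp only [sub_eq_add_neg, measure_preimage_add_right]
    _ ≤ ENNReal.ofReal (16 * lam * r / δ ^ 2) + ENNReal.ofReal (16 * lam * r / δ ^ 2) :=
        add_le_add hS hS
    _ = ENNReal.ofReal (32 * lam * r / δ ^ 2) := by
        rw [← ENNReal.ofReal_add (by positivity) (by positivity)]; ring_nf
end

section
/- There exists a numerical constant C > 0 such that for every λ > 0, every convex, λ-Lipschitz and differentiable function g : ℝ → ℝ, every pair of parameters δ, r > 0, and every variance σ² > 0 with r ≥ σδ²/λ, one has (1/√(2πσ²)) ∫_{Stab(λ,δ,r,g)} e^{−t²/(2σ²)} dt ≤ 1 − exp( −C λ² r² / (σ² δ⁴) ). -/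
open MeasureTheory

/-!
If `g₁` is convex and `r`-close to `g`, comparing slopes over windows of length `L` gives
`g'(t - L) - 2r/L ≤ g₁'(t) ≤ g'(t + L) + 2r/L`; hence with `L = 4r/δ` every point of `Stab`
satisfies `g'(t + L) - g'(t - L) ≥ δ/2`. As `g'` is monotone with `|g'| ≤ λ`, the integral of
`g'(t + L) - g'(t - L)` over any interval telescopes to at most `4Lλ`, so by Markov's inequality
`Stab` has Lebesgue measure at most `M = 32λr/δ²`, and `M ≥ σ` because `r ≥ σδ²/λ`.
Such a set misses at least `3M` of `(-2M, 2M]`, where the density `e^{-t²/(2σ²)}` is at least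
`e^{-2M²/σ²}`; as `√(2πσ²) ≤ 3M`, the complement of `Stab` has Gaussian mass at least
`e^{-2M²/σ²}`.
-/

open Set Real

theorem ConvexOn.deriv_le_deriv_add_of_abs_sub_le_s10 {s : Set ℝ} {f h : ℝ → ℝ} {x y r : ℝ}
    (hf : ConvexOn ℝ s f) (hh : ConvexOn ℝ s h) (hx : x ∈ s) (hy : y ∈ s)
    (hfx : DifferentiableAt ℝ f x) (hhy : DifferentiableAt ℝ h y) (hxy : x < y)
    (hrx : |f x - h x| ≤ r) (hry : |f y - h y| ≤ r) :
    deriv f x ≤ deriv h y + 2 * r / (y - x) := by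
  have hyx : 0 < y - x := sub_pos.2 hxy
  calc deriv f x ≤ slope f x y := hf.deriv_le_slope hx hy hxy hfx
    _ ≤ slope h x y + 2 * r / (y - x) := by
      rw [slope_def_field, slope_def_field, ← add_div, div_le_div_iff_of_pos_right hyx]
      linarith [abs_le.mp hrx, abs_le.mp hry]
    _ ≤ deriv h y + 2 * r / (y - x) := by
      gcongr
      exact hh.slope_le_deriv hx hy hxy hhy

theorem stab_subset_setOf_le_deriv_sub {lam δ r L : ℝ} {g : ℝ → ℝ}
    (hg : ConvexOn ℝ univ g) (hgd : Differentiable ℝ g) (hL : 0 < L) :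
    Stab lam δ r g ⊆ {t | δ - 2 * r / L ≤ deriv g (t + L) - deriv g (t - L)} := by
  rintro t ⟨g₁, ⟨hg₁, -, hg₁d, hclose⟩, hdev⟩
  have hmono : Monotone (deriv g) :=
    monotoneOn_univ.mp (hg.monotoneOn_deriv fun x _ => hgd x)
  rcases lt_abs.mp hdev with hup | hdown
  · have := hg₁.deriv_le_deriv_add_of_abs_sub_le_s10 hg (mem_univ t) (mem_univ (t + L)) (hg₁d t)
      (hgd _) (by linarith) (abs_sub_comm (g t) _ ▸ hclose t)
      (abs_sub_comm (g (t + L)) _ ▸ hclose (t + L))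
    rw [add_sub_cancel_left] at this
    have := hmono (show t - L ≤ t by linarith)
    simp only [mem_ofPred_eq]
    linarith
  · have := hg.deriv_le_deriv_add_of_abs_sub_le_s10 hg₁ (mem_univ (t - L)) (mem_univ t) (hgd _)
      (hg₁d t) (by linarith) (hclose (t - L)) (hclose t)
    rw [sub_sub_cancel] at this
    have := hmono (show t ≤ t + L by linarith)
    simp only [mem_ofPred_eq]
    linarith

theorem Monotone.integral_comp_add_sub_comp_sub_le {φ : ℝ → ℝ} (hφ : Monotone φ)
    {K L : ℝ} (hK : ∀ t, |φ t| ≤ K) (hL : 0 ≤ L) (a b : ℝ) :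
    ∫ t in a..b, (φ (t + L) - φ (t - L)) ≤ 4 * L * K := by
  have hint : ∀ c d, IntervalIntegrable φ volume c d := fun _ _ => hφ.intervalIntegrable
  have hwindow : ∀ c, |∫ t in c + L..c - L, φ t| ≤ 2 * L * K := fun c => by
    have := intervalIntegral.norm_integral_le_of_norm_le_const (a := c + L) (b := c - L)
      (fun t _ => (Real.norm_eq_abs (φ t)).trans_le (hK t))
    rwa [Real.norm_eq_abs, show c - L - (c + L) = -(2 * L) by ring, abs_neg,
      abs_of_nonneg (by linarith : 0 ≤ 2 * L), mul_comm K] at this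
  have hadd : Monotone fun t => φ (t + L) := fun _ _ h => hφ (add_le_add_left h L)
  have hsub : Monotone fun t => φ (t - L) := fun _ _ h => hφ (sub_le_sub_right h L)
  rw [intervalIntegral.integral_sub hadd.intervalIntegrable hsub.intervalIntegrable,
    intervalIntegral.integral_comp_add_right, intervalIntegral.integral_comp_sub_right,
    intervalIntegral.integral_interval_sub_interval_comm (hint _ _) (hint _ _) (hint _ _)]
  linarith [abs_le.mp (hwindow a), abs_le.mp (hwindow b)]

theorem measure_le_of_forall_inter_ball_le {α : Type*} [PseudoMetricSpace α] [MeasurableSpace α]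
    (μ : Measure α) (s : Set α) (x : α) {c : ENNReal}
    (h : ∀ n : ℕ, μ (s ∩ Metric.ball x n) ≤ c) : μ s ≤ c :=
  calc μ s = μ (⋃ n : ℕ, s ∩ Metric.ball x n) := by
        rw [← inter_iUnion, Metric.iUnion_ball_nat, inter_univ]
    _ = ⨆ n : ℕ, μ (s ∩ Metric.ball x n) :=
        Monotone.measure_iUnion fun _ _ hmn =>
          inter_subset_inter_right _ (Metric.ball_subset_ball (by exact_mod_cast hmn))
    _ ≤ c := iSup_le h

theorem Monotone.volume_setOf_le_comp_add_sub_comp_sub_le {φ : ℝ → ℝ} (hφ : Monotone φ)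
    {K L ε : ℝ} (hK : ∀ t, |φ t| ≤ K) (hL : 0 ≤ L) (hε : 0 < ε) :
    volume {t | ε ≤ φ (t + L) - φ (t - L)} ≤ ENNReal.ofReal (4 * L * K / ε) := by
  set A := {t | ε ≤ φ (t + L) - φ (t - L)}
  refine measure_le_of_forall_inter_ball_le _ _ 0 fun n => ?_
  set W := Ioc (-(n : ℝ)) n
  have hball : Metric.ball (0 : ℝ) n ⊆ W := by
    rw [Real.ball_zero_eq_Ioo]; exact Ioo_subset_Ioc_self
  have hfin : volume (A ∩ W) ≠ ⊤ :=
    measure_ne_top_of_subset inter_subset_right measure_Ioc_lt_top.ne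
  have hadd : Monotone fun t => φ (t + L) := fun _ _ h => hφ (add_le_add_left h L)
  have hsub : Monotone fun t => φ (t - L) := fun _ _ h => hφ (sub_le_sub_right h L)
  have hint : IntervalIntegrable (fun t => φ (t + L) - φ (t - L)) volume (-(n : ℝ)) n :=
    hadd.intervalIntegrable.sub hsub.intervalIntegrable
  have hmarkov := mul_meas_ge_le_integral_of_nonneg (μ := volume.restrict W)
    (Filter.Eventually.of_forall fun t => sub_nonneg.2 (hφ (by linarith : t - L ≤ t + L)))
    ((intervalIntegrable_iff_integrableOn_Ioc_of_le (by simp)).1 hint) ε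
  rw [measureReal_restrict_apply' measurableSet_Ioc, ← intervalIntegral.integral_of_le (by simp)]
    at hmarkov
  have := hmarkov.trans (hφ.integral_comp_add_sub_comp_sub_le hK hL _ _)
  calc volume (A ∩ Metric.ball 0 n) ≤ volume (A ∩ W) :=
        measure_mono (inter_subset_inter_right _ hball)
    _ ≤ ENNReal.ofReal (4 * L * K / ε) := by
      rw [← ENNReal.ofReal_toReal hfin]
      exact ENNReal.ofReal_le_ofReal ((le_div_iff₀' hε).2 this)

theorem integrable_exp_neg_sq_div {σ : ℝ} (hσ : σ ≠ 0) :
    Integrable fun t : ℝ => exp (-t ^ 2 / (2 * σ ^ 2)) := by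
  simp_rw [neg_div, div_eq_inv_mul, ← neg_mul]
  exact integrable_exp_neg_mul_sq (by positivity)

theorem integral_exp_neg_sq_div (σ : ℝ) :
    ∫ t : ℝ, exp (-t ^ 2 / (2 * σ ^ 2)) = √(2 * π * σ ^ 2) := by
  simp_rw [neg_div, div_eq_inv_mul, ← neg_mul, integral_gaussian, div_inv_eq_mul]
  ring_nf

theorem setIntegral_exp_neg_sq_div_le {s : Set ℝ} {σ M : ℝ} (hσ : 0 < σ) (hσM : σ ≤ M)
    (hs : volume s ≤ ENNReal.ofReal M) :
    (∫ t in s, exp (-t ^ 2 / (2 * σ ^ 2))) / √(2 * π * σ ^ 2) ≤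
      1 - exp (-(2 * M ^ 2 / σ ^ 2)) := by
  set f := fun t : ℝ => exp (-t ^ 2 / (2 * σ ^ 2))
  set c := exp (-(2 * M ^ 2 / σ ^ 2))
  have hf : Integrable f := integrable_exp_neg_sq_div hσ.ne'
  have hZ : 0 < √(2 * π * σ ^ 2) := by positivity
  have hZM : √(2 * π * σ ^ 2) ≤ 3 * M :=
    calc √(2 * π * σ ^ 2) ≤ √((3 * σ) ^ 2) := by gcongr; nlinarith [pi_le_four]
      _ ≤ 3 * M := by rw [sqrt_sq (by positivity)]; linarith
  set J := Ioc (-(2 * M)) (2 * M) \ toMeasurable volume s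
  have hJ : MeasurableSet J := measurableSet_Ioc.diff (measurableSet_toMeasurable _ _)
  have hJvol : 3 * M ≤ volume.real J := by
    have hsM : volume.real s ≤ M := ENNReal.toReal_le_of_le_ofReal (by linarith) hs
    have := le_measureReal_sdiff (μ := volume) (s₁ := Ioc (-(2 * M)) (2 * M))
      (s₂ := toMeasurable volume s)
      (by rw [measure_toMeasurable]; exact ne_top_of_le_ne_top ENNReal.ofReal_ne_top hs)
    rw [volume_real_Ioc_of_le (by linarith), measureReal_def, measure_toMeasurable] at this
    rw [measureReal_def] at hsM
    linarith
  have hcJ : ∀ t ∈ J, c ≤ f t := fun t ht => by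
    have ht2 : t ^ 2 ≤ (2 * M) ^ 2 := sq_le_sq' ht.1.1.le ht.1.2
    refine exp_le_exp.2 ?_
    rw [neg_div, neg_le_neg_iff, div_le_div_iff₀ (by positivity) (by positivity)]
    nlinarith
  have hdisj : Disjoint s J := (disjoint_sdiff_right).mono_left (subset_toMeasurable _ _)
  have hsplit : (∫ t in s, f t) + c * (3 * M) ≤ √(2 * π * σ ^ 2) :=
    calc (∫ t in s, f t) + c * (3 * M) ≤ (∫ t in s, f t) + ∫ t in J, f t := by
          gcongr
          exact (mul_le_mul_of_nonneg_left hJvol (exp_pos _).le).trans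
            (setIntegral_ge_of_const_le_real hJ (measure_ne_top_of_subset sdiff_subset
              measure_Ioc_lt_top.ne) hcJ hf.integrableOn)
      _ = ∫ t in s ∪ J, f t := (setIntegral_union hdisj hJ hf.integrableOn hf.integrableOn).symm
      _ ≤ ∫ t, f t :=
          setIntegral_le_integral hf (Filter.Eventually.of_forall fun t => (exp_pos _).le)
      _ = √(2 * π * σ ^ 2) := integral_exp_neg_sq_div σ
  rw [div_le_iff₀ hZ]
  nlinarith [mul_le_mul_of_nonneg_left hZM (exp_pos (-(2 * M ^ 2 / σ ^ 2))).le]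

/-- Corollary: the Gaussian measure (variance `σ²`) of the stability set is bounded away
from `1`, quantitatively. -/
theorem gaussian_measure_stab_le :
    ∃ C : ℝ, 0 < C ∧
      ∀ (lam : ℝ), 0 < lam →
      ∀ g : ℝ → ℝ, ConvexOn ℝ Set.univ g → LipschitzWith (Real.toNNReal lam) g →
        Differentiable ℝ g →
      ∀ r δ σ : ℝ, 0 < r → 0 < δ → 0 < σ → σ * δ ^ 2 / lam ≤ r →
        (∫ t in Stab lam δ r g, Real.exp (-t ^ 2 / (2 * σ ^ 2))) /
            Real.sqrt (2 * Real.pi * σ ^ 2)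
          ≤ 1 - Real.exp (-(C * lam ^ 2 * r ^ 2 / (σ ^ 2 * δ ^ 4))) := by
  refine ⟨2048, by norm_num, ?_⟩
  intro lam hlam g hgc hglip hgd r δ σ hr hδ hσ hrσ
  have hmono : Monotone (deriv g) :=
    monotoneOn_univ.mp (hgc.monotoneOn_deriv fun x _ => hgd x)
  have hbound : ∀ t, |deriv g t| ≤ lam := fun t => by
    simpa [Real.coe_toNNReal _ hlam.le] using norm_deriv_le_of_lipschitz (x₀ := t) hglip
  -- shift `L = 4 r / δ`, chosen so that the error term `2 r / L` is `δ / 2`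
  have hstab :
      Stab lam δ r g ⊆ {t | δ / 2 ≤ deriv g (t + 4 * r / δ) - deriv g (t - 4 * r / δ)} := by
    convert stab_subset_setOf_le_deriv_sub hgc hgd (by positivity : 0 < 4 * r / δ) using 4
    field_simp
    ring
  have hvol : volume (Stab lam δ r g) ≤ ENNReal.ofReal (32 * lam * r / δ ^ 2) :=
    calc volume (Stab lam δ r g) ≤ ENNReal.ofReal (4 * (4 * r / δ) * lam / (δ / 2)) :=
          (measure_mono hstab).trans (hmono.volume_setOf_le_comp_add_sub_comp_sub_le hbound
            (by positivity) (by positivity))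
      _ = ENNReal.ofReal (32 * lam * r / δ ^ 2) := by
          congr 1
          field_simp
          ring
  have hσM : σ ≤ 32 * lam * r / δ ^ 2 := by
    rw [div_le_iff₀ hlam] at hrσ
    rw [le_div_iff₀ (by positivity)]
    nlinarith
  refine (setIntegral_exp_neg_sq_div_le hσ hσM hvol).trans_eq ?_
  congr 3
  field_simp
  ring
end

section
/- For every function g ∈ 𝒢 one has | ∫_ℝ g(t) e^{−t²/2} dt | ≤ 2 ∫_0^∞ t e^{−t²/2} dt (and the right-hand side equals 2). -/
/-!
Since `e^{-t²/2} = ∫_{|t|}^∞ s e^{-s²/2} ds`, Fubini's theorem gives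
`∫ g(t) e^{-t²/2} dt = ∫_0^∞ s e^{-s²/2} (∫_{-s}^s g) ds`.
The inner integrals are bounded by `1`, so the left side is at most `∫_0^∞ s e^{-s²/2} ds = 1`.
-/

open MeasureTheory

/-- The class `𝒢` of bounded measurable functions on `ℝ` whose integral over every interval is
bounded by `1` in absolute value. -/
def IntervalBddClass (g : ℝ → ℝ) : Prop :=
  Measurable g ∧ (∃ C : ℝ, ∀ t : ℝ, |g t| ≤ C) ∧
    ∀ a b : ℝ, |∫ t in a..b, g t| ≤ 1

open Set Real

theorem integral_Ioi_mul_exp_neg_mul_sq {b : ℝ} (hb : 0 < b) (a : ℝ) :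
    ∫ s in Ioi a, s * exp (-b * s ^ 2) = exp (-b * a ^ 2) / (2 * b) := by
  have hderiv : ∀ x ∈ Ici a,
      HasDerivAt (fun s ↦ -exp (-b * s ^ 2) / (2 * b)) (x * exp (-b * x ^ 2)) x := by
    intro x _
    refine (((hasDerivAt_pow 2 x).const_mul (-b)).exp.neg.div_const (2 * b)).congr_deriv ?_
    field_simp
    ring
  have hlim : Filter.Tendsto (fun s ↦ -exp (-b * s ^ 2) / (2 * b)) Filter.atTop (nhds 0) := by
    have hexp := tendsto_exp_atBot.comp
      ((Filter.tendsto_pow_atTop two_ne_zero).const_mul_atTop_of_neg (neg_lt_zero.2 hb))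
    simpa using (hexp.neg.div_const (2 * b))
  rw [integral_Ioi_of_hasDerivAt_of_tendsto' hderiv
    (integrable_mul_exp_neg_mul_sq hb).integrableOn hlim]
  ring

section LayerCake

variable {g k : ℝ → ℝ}

theorem integral_mul_integral_Ioi_abs (hg : Measurable g) (hk : Measurable k)
    (hk_nonneg : ∀ s, 0 < s → 0 ≤ k s) (hk_int : IntegrableOn k (Ioi 0))
    (hgk : Integrable fun t ↦ g t * ∫ s in Ioi |t|, k s) :
    ∫ t, g t * ∫ s in Ioi |t|, k s = ∫ s in Ioi 0, k s * ∫ t in -s..s, g t := by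
  set F : ℝ → ℝ → ℝ := fun t s ↦ if |t| < s then k s * g t else 0
  have hF_meas : Measurable (Function.uncurry F) :=
    Measurable.ite (measurableSet_lt measurable_fst.abs measurable_snd)
      ((hk.comp measurable_snd).mul (hg.comp measurable_fst)) measurable_const
  have hF_t : ∀ t, (F t ·) = (Ioi |t|).indicator (fun s ↦ k s * g t) := fun t ↦ by
    ext s; simp [F, indicator_apply]
  have hF_s : ∀ s, (F · s) = (Ioo (-s) s).indicator (fun t ↦ k s * g t) := fun s ↦ by
    ext t; simp [F, indicator_apply, abs_lt]
  have hk_tail : ∀ t : ℝ, IntegrableOn k (Ioi |t|) := fun t ↦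
    hk_int.mono_set (Ioi_subset_Ioi (abs_nonneg t))
  have hF_norm : ∀ t, ∫ s, ‖F t s‖ = ‖g t * ∫ s in Ioi |t|, k s‖ := fun t ↦ by
    have hk_pos : ∀ s ∈ Ioi |t|, 0 ≤ k s := fun s hs ↦
      hk_nonneg s ((abs_nonneg t).trans_lt hs)
    have : (‖F t ·‖) = (Ioi |t|).indicator (fun s ↦ |g t| * k s) := by
      ext s
      simp only [F, indicator_apply, mem_Ioi]
      split_ifs with hts
      · rw [norm_mul, Real.norm_of_nonneg (hk_pos s hts), mul_comm, Real.norm_eq_abs]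
      · exact norm_zero
    rw [this, integral_indicator measurableSet_Ioi, integral_const_mul, norm_mul,
      Real.norm_of_nonneg (setIntegral_nonneg measurableSet_Ioi hk_pos), Real.norm_eq_abs]
  have hF_int : Integrable (Function.uncurry F) (volume.prod volume) := by
    refine (integrable_prod_iff hF_meas.aestronglyMeasurable).2 ⟨.of_forall fun t ↦ ?_, ?_⟩
    · change Integrable (F t ·)
      rw [hF_t]
      exact (integrable_indicator_iff measurableSet_Ioi).2 ((hk_tail t).mul_const _)
    · simpa only [Function.uncurry_apply_pair, hF_norm] using hgk.norm
  have hF_s_int :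
      ∀ s, ∫ t, F t s = (Ioi 0).indicator (fun s ↦ k s * ∫ t in -s..s, g t) s := by
    intro s
    rw [hF_s, integral_indicator measurableSet_Ioo, integral_const_mul, indicator_apply]
    split_ifs with hs
    · rw [intervalIntegral.integral_of_le (neg_le_self (le_of_lt hs)),
        integral_Ioc_eq_integral_Ioo]
    · rw [Ioo_eq_empty (by linarith [not_lt.1 (show ¬0 < s from hs)]), Measure.restrict_empty,
        integral_zero_measure, mul_zero]
  calc ∫ t, g t * ∫ s in Ioi |t|, k s = ∫ t, ∫ s, F t s := by
        congr 1 with t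
        rw [hF_t, integral_indicator measurableSet_Ioi, integral_mul_const, mul_comm]
    _ = ∫ s, ∫ t, F t s := integral_integral_swap hF_int
    _ = ∫ s in Ioi 0, k s * ∫ t in -s..s, g t := by
        simp only [hF_s_int, integral_indicator measurableSet_Ioi]

theorem abs_integral_mul_integral_Ioi_abs_le (hg : IntervalBddClass g) (hk : Measurable k)
    (hk_nonneg : ∀ s, 0 < s → 0 ≤ k s) (hk_int : IntegrableOn k (Ioi 0))
    (htail : Integrable fun t ↦ ∫ s in Ioi |t|, k s) :
    |∫ t, g t * ∫ s in Ioi |t|, k s| ≤ ∫ s in Ioi 0, k s := by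
  obtain ⟨hg_meas, ⟨C, hC⟩, hg_int⟩ := hg
  rw [integral_mul_integral_Ioi_abs hg_meas hk hk_nonneg hk_int
    (htail.bdd_mul hg_meas.aestronglyMeasurable (.of_forall hC)), ← Real.norm_eq_abs]
  refine norm_integral_le_of_norm_le hk_int ?_
  filter_upwards [ae_restrict_mem measurableSet_Ioi] with s hs
  rw [norm_mul, Real.norm_of_nonneg (hk_nonneg s hs)]
  exact mul_le_of_le_one_right (hk_nonneg s hs) (hg_int _ _)

end LayerCake

/-- Proposition: the Gaussian-weighted integral of any `g ∈ 𝒢` is bounded by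
`2 ∫_0^∞ t e^{-t²/2} dt`, and this bound equals `2`. -/
theorem gaussian_integral_of_interval_bdd :
    (∀ g : ℝ → ℝ, IntervalBddClass g →
      |∫ t : ℝ, g t * Real.exp (-t ^ 2 / 2)| ≤
        2 * ∫ t in Set.Ioi (0 : ℝ), t * Real.exp (-t ^ 2 / 2)) ∧
    2 * (∫ t in Set.Ioi (0 : ℝ), t * Real.exp (-t ^ 2 / 2)) = 2 := by
  have h_half : ∀ t : ℝ, -t ^ 2 / 2 = -(1 / 2) * t ^ 2 := fun t ↦ by ring
  have h_tail : ∀ a : ℝ, ∫ s in Ioi a, s * exp (-s ^ 2 / 2) = exp (-a ^ 2 / 2) := fun a ↦ by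
    simpa [h_half] using integral_Ioi_mul_exp_neg_mul_sq one_half_pos a
  have h_one : ∫ s in Ioi 0, s * exp (-s ^ 2 / 2) = 1 := by simpa using h_tail 0
  refine ⟨fun g hg ↦ ?_, by rw [h_one]; norm_num⟩
  have key := abs_integral_mul_integral_Ioi_abs_le hg (k := fun s ↦ s * exp (-s ^ 2 / 2))
    (by fun_prop) (fun s hs ↦ by positivity)
    (by simpa only [h_half] using (integrable_mul_exp_neg_mul_sq one_half_pos).integrableOn)
    (by
      simp only [h_tail, sq_abs]
      simpa only [h_half] using integrable_exp_neg_mul_sq one_half_pos)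
  simp only [h_one] at key
  simp only [h_tail, sq_abs] at key
  rw [h_one]
  linarith
end

section
/- There exists a numerical constant C > 0 such that for every δ ∈ (0,1] and every function g ∈ 𝒢 satisfying g(t) ≥ −1 for all t ∈ ℝ, one has ∫_ℝ 1_{{g(t) ≤ δ}} e^{−t²/2} dt ≥ e^{−C/δ²}. -/
/-!
On `I = (0, 3/δ]` the function `g` is `≥ -1` on the sublevel set `S = {g ≤ δ}` and `> δ` off
it, so `1 ≥ ∫_I g ≥ 3 - (1 + δ) |S ∩ I|`, whence `|S ∩ I| ≥ 2 / (1 + δ) ≥ 1`. On `I` the Gaussian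
density is at least `e^{-(3/δ)²/2} = e^{-9/(2δ²)}`, which gives the bound with `C = 9/2`.
-/

open MeasureTheory

open Set

section Sublevel

variable {α : Type*} [MeasurableSpace α] {μ : Measure α} {g : α → ℝ} {s : Set α} {a δ : ℝ}

/-- The left side is `δ μ(s \ S) + a μ(S ∩ s)` for `S = {g ≤ δ}`, and `g > δ` off `S`. -/
theorem mul_measureReal_sub_le_setIntegral (hg : Measurable g) (hgs : IntegrableOn g s μ)
    (hs : MeasurableSet s) (hμs : μ s ≠ ⊤) (ha : ∀ x ∈ s, a ≤ g x) :
    δ * μ.real s - (δ - a) * μ.real ({x | g x ≤ δ} ∩ s) ≤ ∫ x in s, g x ∂μ := by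
  set S := {x | g x ≤ δ}
  have hS : MeasurableSet S := measurableSet_le hg measurable_const
  have hind : IntegrableOn (S.indicator fun _ => δ - a) s μ :=
    (integrableOn_const hμs).indicator hS
  have hlower : ∀ x ∈ s, δ - S.indicator (fun _ => δ - a) x ≤ g x := by
    intro x hx
    by_cases hxS : x ∈ S
    · simp only [indicator_of_mem hxS, sub_sub_cancel, ha x hx]
    · simp only [indicator_of_notMem hxS, sub_zero]
      exact (not_le.mp hxS).le
  calc δ * μ.real s - (δ - a) * μ.real (S ∩ s)
      = ∫ x in s, (δ - S.indicator (fun _ => δ - a) x) ∂μ := by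
        rw [integral_sub (integrableOn_const hμs).integrable hind.integrable, setIntegral_const,
          integral_indicator_const _ hS, measureReal_restrict_apply hS, smul_eq_mul, smul_eq_mul]
        ring
    _ ≤ ∫ x in s, g x ∂μ :=
        setIntegral_mono_on ((integrableOn_const hμs).sub hind) hgs hs hlower

end Sublevel

namespace IntervalBddClass

variable {g : ℝ → ℝ}

theorem integrableOn (hg : IntervalBddClass g) {s : Set ℝ} (hs : volume s ≠ ⊤) :
    IntegrableOn g s := by
  obtain ⟨hmeas, ⟨B, hB⟩, -⟩ := hg
  exact Measure.integrableOn_of_bounded hs hmeas.aestronglyMeasurable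
    (M := B) (Filter.Eventually.of_forall fun t => hB t)

theorem setIntegral_Ioc_le_one (hg : IntervalBddClass g) {a b : ℝ} (hab : a ≤ b) :
    ∫ t in Ioc a b, g t ≤ 1 := by
  rw [← intervalIntegral.integral_of_le hab]
  exact (le_abs_self _).trans (hg.2.2 a b)

theorem one_le_volume_sublevel_inter_Ioc (hg : IntervalBddClass g) (hg1 : ∀ t, -1 ≤ g t)
    {δ : ℝ} (hδ : 0 < δ) (hδ1 : δ ≤ 1) :
    1 ≤ volume.real ({t | g t ≤ δ} ∩ Ioc 0 (3 / δ)) := by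
  have hL : 0 ≤ 3 / δ := by positivity
  have hvol : volume.real (Ioc 0 (3 / δ)) = 3 / δ := by simp [hL]
  have key := (mul_measureReal_sub_le_setIntegral (δ := δ) hg.1
    (hg.integrableOn measure_Ioc_lt_top.ne) measurableSet_Ioc measure_Ioc_lt_top.ne
    fun t _ => hg1 t).trans (hg.setIntegral_Ioc_le_one hL)
  rw [hvol, mul_div_cancel₀ _ hδ.ne'] at key
  nlinarith [measureReal_nonneg (μ := volume) (s := {t | g t ≤ δ} ∩ Ioc 0 (3 / δ))]

end IntervalBddClass

theorem integrable_exp_neg_sq_div_two : Integrable fun t : ℝ => Real.exp (-t ^ 2 / 2) := by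
  simpa [neg_div, div_eq_inv_mul] using integrable_exp_neg_mul_sq (b := 1 / 2) (by norm_num)

theorem exp_neg_sq_div_two_mul_le_setIntegral {S : Set ℝ} (hS : MeasurableSet S) (L : ℝ) :
    Real.exp (-L ^ 2 / 2) * volume.real (S ∩ Ioc 0 L) ≤ ∫ t in S, Real.exp (-t ^ 2 / 2) := by
  calc Real.exp (-L ^ 2 / 2) * volume.real (S ∩ Ioc 0 L)
      ≤ ∫ t in S ∩ Ioc 0 L, Real.exp (-t ^ 2 / 2) := by
        refine setIntegral_ge_of_const_le_real (hS.inter measurableSet_Ioc)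
          (measure_inter_lt_top_of_right_ne_top measure_Ioc_lt_top.ne).ne
          (fun t ht => ?_) integrable_exp_neg_sq_div_two.integrableOn
        have : t ^ 2 ≤ L ^ 2 := pow_le_pow_left₀ ht.2.1.le ht.2.2 2
        gcongr
    _ ≤ ∫ t in S, Real.exp (-t ^ 2 / 2) :=
        setIntegral_mono_set integrable_exp_neg_sq_div_two.integrableOn
          (Filter.Eventually.of_forall fun _ => (Real.exp_pos _).le)
          (Filter.Eventually.of_forall inter_subset_left)

/-- Lemma: for `g ∈ 𝒢` with `g ≥ -1`, the Gaussian mass of the sublevel set `{g ≤ δ}` is at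
least `e^{-C/δ²}` for a numerical constant `C`. -/
theorem gaussian_mass_sublevel_of_interval_bdd :
    ∃ C : ℝ, 0 < C ∧
      ∀ δ : ℝ, 0 < δ → δ ≤ 1 →
      ∀ g : ℝ → ℝ, IntervalBddClass g → (∀ t : ℝ, -1 ≤ g t) →
        Real.exp (-C / δ ^ 2) ≤ ∫ t in {t : ℝ | g t ≤ δ}, Real.exp (-t ^ 2 / 2) := by
  refine ⟨9 / 2, by norm_num, fun δ hδ hδ1 g hg hg1 => ?_⟩
  have hC : -(9 / 2) / δ ^ 2 = -(3 / δ) ^ 2 / 2 := by field_simp; ring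
  calc Real.exp (-(9 / 2) / δ ^ 2)
      ≤ Real.exp (-(3 / δ) ^ 2 / 2) * volume.real ({t | g t ≤ δ} ∩ Ioc 0 (3 / δ)) := by
        rw [hC]
        exact le_mul_of_one_le_right (Real.exp_pos _).le
          (hg.one_le_volume_sublevel_inter_Ioc hg1 hδ hδ1)
    _ ≤ ∫ t in {t | g t ≤ δ}, Real.exp (-t ^ 2 / 2) :=
        exp_neg_sq_div_two_mul_le_setIntegral (measurableSet_le hg.1 measurable_const) _
end

section
/- Let r, δ > 0 and let g, g₁ : ℝ → ℝ be convex, differentiable functions satisfying sup_{s∈ℝ} |g(s) − g₁(s)| ≤ r. If at some point t ∈ ℝ one has g₁'(t) − g'(t) > δ, then g'(t + 4r/δ) ≥ g'(t) + δ/2. -/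
/-!
Over `[t, t + L]` with `L = 4r/δ`, convexity puts the chord slope of `g₁` above `g₁'(t)` and the
chord slope of `g` below `g'(t + L)`, while uniform `r`-closeness makes the two chord slopes differ
by at most `2r/L = δ/2`.
-/

theorem slope_le_slope_add_of_abs_sub_le {f h : ℝ → ℝ} {r a b : ℝ} (hab : a < b)
    (ha : |f a - h a| ≤ r) (hb : |f b - h b| ≤ r) :
    slope h a b ≤ slope f a b + 2 * r / (b - a) := by
  rw [slope_def_field, slope_def_field, ← add_div, div_le_div_iff_of_pos_right (sub_pos.2 hab)]
  linarith [abs_le.1 ha, abs_le.1 hb]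

/-- If `g, g₁` are convex differentiable functions on `ℝ` that are uniformly `r`-close, and at
some point `t` the derivative of `g₁` exceeds that of `g` by more than `δ`, then the derivative
of `g` increases by at least `δ/2` over the interval `[t, t + 4r/δ]`. -/
theorem deriv_increase_of_close_convex
    (r δ : ℝ) (hr : 0 < r) (hδ : 0 < δ)
    (g g₁ : ℝ → ℝ)
    (hg : ConvexOn ℝ Set.univ g) (hg₁ : ConvexOn ℝ Set.univ g₁)
    (hgd : Differentiable ℝ g) (hg₁d : Differentiable ℝ g₁)
    (hclose : ∀ s : ℝ, |g s - g₁ s| ≤ r)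
    (t : ℝ) (ht : δ < deriv g₁ t - deriv g t) :
    deriv g t + δ / 2 ≤ deriv g (t + 4 * r / δ) := by
  have hty : t < t + 4 * r / δ := lt_add_of_pos_right t (by positivity)
  have hgap : 2 * r / (t + 4 * r / δ - t) = δ / 2 := by field_simp; ring
  have hderiv₁ : deriv g₁ t ≤ slope g₁ t (t + 4 * r / δ) :=
    hg₁.deriv_le_slope (Set.mem_univ _) (Set.mem_univ _) hty (hg₁d t)
  have hchord := slope_le_slope_add_of_abs_sub_le hty (hclose t) (hclose (t + 4 * r / δ))
  have hderiv : slope g t (t + 4 * r / δ) ≤ deriv g (t + 4 * r / δ) :=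
    hg.slope_le_deriv (Set.mem_univ _) (Set.mem_univ _) hty (hgd _)
  linarith
end
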